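/- Let T_k be the complete binary tree of depth k ≥ 1. In Maker-Breaker Incidence, Ls(T_k) = 2^{k−1} and Rs(T_k) = 2^{k−1} − 1. -/

import Mathlib

/-- Minimax value of a scoring positional game: players alternately claim
unclaimed vertices (`turn = true` means Left/Maker to move); when all vertices
are claimed the value is given by `score VL VR`. Left maximizes, Right minimizes. -/
noncomputable def gameValue {V : Type} [Fintype V] [DecidableEq V]
    (score : Finset V → Finset V → ℤ) :
    Bool → Finset V → Finset V → ℤ := fun turn VL VR =>
  if h : (VL ∪ VR)ᶜ = (∅ : Finset V) then score VL VR
  else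
    have hne : ((VL ∪ VR)ᶜ).attach.Nonempty :=
      Finset.attach_nonempty_iff.mpr (Finset.nonempty_iff_ne_empty.mpr h)
    if turn then
      ((VL ∪ VR)ᶜ).attach.sup' hne (fun v => gameValue score false (insert v.1 VL) VR)
    else
      ((VL ∪ VR)ᶜ).attach.inf' hne (fun v => gameValue score true VL (insert v.1 VR))
termination_by turn VL VR => ((VL ∪ VR)ᶜ).card
decreasing_by
  · rw [Finset.insert_union, Finset.compl_insert]
    exact Finset.card_erase_lt_of_mem v.2
  · rw [Finset.union_insert, Finset.compl_insert]
    exact Finset.card_erase_lt_of_mem v.2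

/-- Maker-Breaker Incidence final score: number of edges of `G` both of whose
endpoints belong to Left's (Maker's) set. -/
noncomputable def mbScore {V : Type} [Fintype V] [DecidableEq V]
    (G : SimpleGraph V) (VL : Finset V) (_ : Finset V) : ℤ :=
  ({e ∈ G.edgeSet | ∀ w ∈ e, w ∈ VL} : Set (Sym2 V)).ncard

/-- Maker-Maker Incidence final score: Left's edges minus Right's edges. -/
noncomputable def mmScore {V : Type} [Fintype V] [DecidableEq V]
    (G : SimpleGraph V) (VL VR : Finset V) : ℤ :=
  (({e ∈ G.edgeSet | ∀ w ∈ e, w ∈ VL} : Set (Sym2 V)).ncard : ℤ)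
    - (({e ∈ G.edgeSet | ∀ w ∈ e, w ∈ VR} : Set (Sym2 V)).ncard : ℤ)

noncomputable def LsMB {V : Type} [Fintype V] [DecidableEq V] (G : SimpleGraph V) : ℤ :=
  gameValue (mbScore G) true ∅ ∅

noncomputable def RsMB {V : Type} [Fintype V] [DecidableEq V] (G : SimpleGraph V) : ℤ :=
  gameValue (mbScore G) false ∅ ∅

noncomputable def LsMM {V : Type} [Fintype V] [DecidableEq V] (G : SimpleGraph V) : ℤ :=
  gameValue (mmScore G) true ∅ ∅

noncomputable def RsMM {V : Type} [Fintype V] [DecidableEq V] (G : SimpleGraph V) : ℤ :=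
  gameValue (mmScore G) false ∅ ∅

/-- Maker-Breaker final score on a hypergraph with edge set `E`. -/
def mbScoreH {V : Type} [Fintype V] [DecidableEq V]
    (E : Finset (Finset V)) (VL : Finset V) (_ : Finset V) : ℤ :=
  ((E.filter (fun e => e ⊆ VL)).card : ℤ)

/-- Maker-Maker final score on a hypergraph with edge set `E`. -/
def mmScoreH {V : Type} [Fintype V] [DecidableEq V]
    (E : Finset (Finset V)) (VL VR : Finset V) : ℤ :=
  ((E.filter (fun e => e ⊆ VL)).card : ℤ) - ((E.filter (fun e => e ⊆ VR)).card : ℤ)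

/-- The complete binary tree of depth `k`, with vertices indexed in heap order:
vertex `i` (for `1 ≤ i ≤ 2^{k+1} - 1`) has children `2i` and `2i+1`. -/
def binTree (k : ℕ) : SimpleGraph (Fin (2 ^ (k + 1) - 1)) :=
  SimpleGraph.fromRel
    (fun a b => (b.1 + 1) = 2 * (a.1 + 1) ∨ (b.1 + 1) = 2 * (a.1 + 1) + 1)

/-!
Maker's lower bounds come from a pairing strategy on sibling pairs: Maker answers every Breaker
move on a non-root vertex with its sibling (and, moving first, opens with the root). Maker then
owns one vertex of each of the `2 ^ (k - 1) - 1` sibling pairs of non-root internal vertices, and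
every internal Maker vertex has a Maker child, which gives one Maker edge per internal Maker vertex.

The upper bounds are an Erdős–Selfridge argument with the potential `∑ 2 ^ j` over the edges with
no Breaker endpoint, `j` being the number of Maker endpoints. A Maker move raises the potential by
the danger of the claimed vertex and a Breaker move lowers it by the same amount; Breaker always
claims a vertex of maximal danger, so a Breaker move followed by a Maker move never raises it. At
the end the potential is `4 * score`, and it starts at `|E| = 2 ^ (k + 1) - 2`, plus at most
`Δ = 3` after Maker's opening move. Hence `4 * Rs ≤ 2 ^ (k + 1) - 2` and `4 * Ls ≤ 2 ^ (k + 1) + 1`.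
-/

open Finset

section GameValue

variable {V : Type} [Fintype V] [DecidableEq V] (score : Finset V → Finset V → ℤ)
  {VL VR : Finset V}

theorem gameValue_of_compl_eq_empty (h : (VL ∪ VR)ᶜ = ∅) (t : Bool) :
    gameValue score t VL VR = score VL VR := by
  rw [gameValue, dif_pos h]

theorem exists_gameValue_true_eq (h : (VL ∪ VR)ᶜ.Nonempty) :
    ∃ u ∈ (VL ∪ VR)ᶜ, gameValue score true VL VR = gameValue score false (insert u VL) VR := by
  rw [gameValue, dif_neg h.ne_empty]
  obtain ⟨u, -, hu⟩ := exists_mem_eq_sup' (attach_nonempty_iff.2 h)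
    fun v : {x // x ∈ (VL ∪ VR)ᶜ} => gameValue score false (insert v.1 VL) VR
  exact ⟨u, u.2, hu⟩

theorem exists_gameValue_false_eq (h : (VL ∪ VR)ᶜ.Nonempty) :
    ∃ v ∈ (VL ∪ VR)ᶜ, gameValue score false VL VR = gameValue score true VL (insert v VR) := by
  rw [gameValue, dif_neg h.ne_empty]
  obtain ⟨v, -, hv⟩ := exists_mem_eq_inf' (attach_nonempty_iff.2 h)
    fun v : {x // x ∈ (VL ∪ VR)ᶜ} => gameValue score true VL (insert v.1 VR)
  exact ⟨v, v.2, hv⟩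

theorem gameValue_false_insert_le {u : V} (hu : u ∈ (VL ∪ VR)ᶜ) :
    gameValue score false (insert u VL) VR ≤ gameValue score true VL VR := by
  conv_rhs => rw [gameValue, dif_neg (ne_empty_of_mem hu)]
  exact le_sup' (fun v : {x // x ∈ (VL ∪ VR)ᶜ} => gameValue score false (insert v.1 VL) VR)
    (mem_attach _ ⟨u, hu⟩)

theorem gameValue_false_le_true_insert {v : V} (hv : v ∈ (VL ∪ VR)ᶜ) :
    gameValue score false VL VR ≤ gameValue score true VL (insert v VR) := by
  conv_lhs => rw [gameValue, dif_neg (ne_empty_of_mem hv)]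
  exact inf'_le (fun v : {x // x ∈ (VL ∪ VR)ᶜ} => gameValue score true VL (insert v.1 VR))
    (mem_attach _ ⟨v, hv⟩)

end GameValue

section Pairing

variable {V : Type}

/-- The invariant of Maker's pairing strategy for the pairing `σ`, whose fixed points are the
unpaired vertices. -/
def PairingInvariant (σ : V → V) (VL VR : Finset V) : Prop :=
  ∀ c ∈ VR, σ c ≠ c → σ c ∈ VL

def MeetsEveryPair (σ : V → V) (S : Finset V) : Prop :=
  ∀ x, σ x ≠ x → x ∈ S ∨ σ x ∈ S

variable {σ : V → V} {VL VR : Finset V}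

theorem PairingInvariant.mono_left (h : PairingInvariant σ VL VR) {VL' : Finset V}
    (hsub : VL ⊆ VL') : PairingInvariant σ VL' VR :=
  fun c hc hσc => hsub (h c hc hσc)

theorem PairingInvariant.insert_insert [DecidableEq V] (h : PairingInvariant σ VL VR) (v : V) :
    PairingInvariant σ (insert (σ v) VL) (insert v VR) := by
  intro c hc hσc
  rcases mem_insert.1 hc with rfl | hc
  · exact mem_insert_self _ _
  · exact mem_insert_of_mem (h c hc hσc)

theorem PairingInvariant.insert_right [DecidableEq V] (h : PairingInvariant σ VL VR)
    (hσ : Function.Involutive σ) {v : V} (hv : v ∉ VL)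
    (hpartner : σ v ≠ v → σ v ∈ VL ∪ insert v VR) : PairingInvariant σ VL (insert v VR) := by
  intro c hc hσc
  rcases mem_insert.1 hc with rfl | hc
  · rcases mem_union.1 (hpartner hσc) with hL | hR
    · exact hL
    rcases mem_insert.1 hR with h' | h'
    · exact absurd h' hσc
    · exact absurd (hσ c ▸ h _ h' (by rwa [hσ c, ne_comm])) hv
  · exact h c hc hσc

theorem PairingInvariant.covers [Fintype V] [DecidableEq V] (h : PairingInvariant σ VL VR)
    (hfull : (VL ∪ VR)ᶜ = ∅) : MeetsEveryPair σ VL := by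
  intro x hx
  have : x ∈ VL ∪ VR := by rw [← compl_compl (VL ∪ VR), hfull, compl_empty]; exact mem_univ x
  exact (mem_union.1 this).imp_right (h x · hx)

theorem le_gameValue_of_pairing [Fintype V] [DecidableEq V] (score : Finset V → Finset V → ℤ)
    (hσ : Function.Involutive σ) {VL₀ : Finset V} {B : ℤ}
    (hscore : ∀ VL VR, VL₀ ⊆ VL → (VL ∪ VR)ᶜ = ∅ → MeetsEveryPair σ VL → B ≤ score VL VR)
    (t : Bool) (hVL₀ : VL₀ ⊆ VL) (hinv : PairingInvariant σ VL VR) :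
    B ≤ gameValue score t VL VR := by
  induction hn : #(VL ∪ VR)ᶜ using Nat.strong_induction_on generalizing t VL VR with
  | _ n ih =>
  subst hn
  rcases (VL ∪ VR)ᶜ.eq_empty_or_nonempty with hfull | hfree
  · rw [gameValue_of_compl_eq_empty score hfull]
    exact hscore VL VR hVL₀ hfull (hinv.covers hfull)
  cases t
  · obtain ⟨v, hv, hvalue⟩ := exists_gameValue_false_eq score hfree
    rw [hvalue]
    have hlt : #(VL ∪ insert v VR)ᶜ < #(VL ∪ VR)ᶜ := by
      rw [union_insert, compl_insert]; exact card_erase_lt_of_mem hv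
    by_cases hreply : σ v ≠ v ∧ σ v ∈ (VL ∪ insert v VR)ᶜ
    · have hlt' : #(insert (σ v) VL ∪ insert v VR)ᶜ < #(VL ∪ VR)ᶜ := by
        refine lt_of_le_of_lt (card_le_card ?_) hlt
        rw [insert_union, compl_insert]; exact erase_subset _ _
      exact (ih _ hlt' false (hVL₀.trans (subset_insert _ _)) (hinv.insert_insert v) rfl).trans
        (gameValue_false_insert_le score hreply.2)
    · -- The partner of `v` is already Maker's, so the invariant holds as it stands.
      refine ih _ hlt true hVL₀ (hinv.insert_right hσ ((mem_compl.1 hv) ∘ mem_union_left VR)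
        fun hσv => ?_) rfl
      by_contra h
      exact hreply ⟨hσv, mem_compl.2 h⟩
  · obtain ⟨u, hu⟩ := hfree
    have hlt : #(insert u VL ∪ VR)ᶜ < #(VL ∪ VR)ᶜ := by
      rw [insert_union, compl_insert]; exact card_erase_lt_of_mem hu
    exact (ih _ hlt false (hVL₀.trans (subset_insert _ _)) (hinv.mono_left (subset_insert _ _))
      rfl).trans (gameValue_false_insert_le score hu)

theorem card_le_two_mul_card_inter_of_involutive [DecidableEq V] (hσ : Function.Involutive σ)
    {S T : Finset V} (hS : ∀ x ∈ S, σ x ∈ S) (hT : ∀ x ∈ S, x ∈ T ∨ σ x ∈ T) :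
    #S ≤ 2 * #(S ∩ T) := by
  have hsub : S ⊆ (S ∩ T) ∪ (S ∩ T).image σ := by
    intro x hx
    rcases hT x hx with h | h
    · exact mem_union_left _ (mem_inter.2 ⟨hx, h⟩)
    · exact mem_union_right _ (mem_image.2 ⟨σ x, mem_inter.2 ⟨hS x hx, h⟩, hσ x⟩)
  have := card_image_le (s := S ∩ T) (f := σ)
  have := card_union_le (S ∩ T) ((S ∩ T).image σ)
  have := card_le_card hsub
  omega

end Pairing

namespace SimpleGraph

variable {V : Type} [DecidableEq V]

/-- Erdős–Selfridge weight: a live edge (one with no Breaker endpoint) weighs `2 ^ j`, where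
`j` is its number of Maker endpoints. -/
def mbWeight (VL : Finset V) : Sym2 V → ℤ :=
  Sym2.lift ⟨fun a b => (if a ∈ VL then 2 else 1) * (if b ∈ VL then 2 else 1),
    fun _ _ => mul_comm _ _⟩

theorem mbWeight_nonneg (VL : Finset V) (e : Sym2 V) : 0 ≤ mbWeight VL e := by
  induction e using Sym2.ind
  simp only [mbWeight, Sym2.lift_mk]
  positivity

theorem mbWeight_empty (e : Sym2 V) : mbWeight ∅ e = 1 := by
  induction e using Sym2.ind
  simp [mbWeight]

theorem mbWeight_of_mem_sym2 {VL : Finset V} {e : Sym2 V} (he : e ∈ VL.sym2) :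
    mbWeight VL e = 4 := by
  induction e using Sym2.ind with
  | _ a b =>
  rw [mem_sym2_iff] at he
  simp [mbWeight, he a (Sym2.mem_mk_left a b), he b (Sym2.mem_mk_right a b)]

theorem mbWeight_insert {VL : Finset V} {u : V} (hu : u ∉ VL) {e : Sym2 V} (he : ¬e.IsDiag) :
    mbWeight (insert u VL) e = mbWeight VL e + if u ∈ e then mbWeight VL e else 0 := by
  induction e using Sym2.ind with
  | _ a b =>
  simp only [Sym2.mk_isDiag_iff] at he
  rcases eq_or_ne a u with rfl | ha
  · simp [mbWeight, hu, Ne.symm he]; split_ifs <;> norm_num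
  rcases eq_or_ne b u with rfl | hb
  · simp [mbWeight, hu, he]; split_ifs <;> norm_num
  simp [mbWeight, ha, hb, ha.symm, hb.symm]

variable [Fintype V] (G : SimpleGraph V) [DecidableRel G.Adj]

theorem mbScore_eq_card (VL VR : Finset V) : mbScore G VL VR = #(G.edgeFinset ∩ VL.sym2) := by
  rw [mbScore, ← Set.ncard_coe_finset]
  congr 2
  ext e
  rw [Finset.mem_coe, mem_inter, mem_edgeFinset, mem_sym2_iff]
  rfl

def mbPotential (VL VR : Finset V) : ℤ :=
  ∑ e ∈ G.edgeFinset ∩ VRᶜ.sym2, mbWeight VL e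

def mbDanger (VL VR : Finset V) (u : V) : ℤ :=
  ∑ e ∈ G.edgeFinset ∩ VRᶜ.sym2 with u ∈ e, mbWeight VL e

theorem mbPotential_insert_left {VL : Finset V} (VR : Finset V) {u : V} (hu : u ∉ VL) :
    G.mbPotential (insert u VL) VR = G.mbPotential VL VR + G.mbDanger VL VR u := by
  simp only [mbPotential, mbDanger]
  rw [sum_filter, ← sum_add_distrib]
  refine sum_congr rfl fun e he => mbWeight_insert hu ?_
  exact G.not_isDiag_of_mem_edgeSet (mem_edgeFinset.1 (mem_inter.1 he).1)

theorem mbPotential_insert_right (VL VR : Finset V) (v : V) :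
    G.mbPotential VL (insert v VR) = G.mbPotential VL VR - G.mbDanger VL VR v := by
  have hlive : G.edgeFinset ∩ (insert v VR)ᶜ.sym2 = {e ∈ G.edgeFinset ∩ VRᶜ.sym2 | v ∉ e} := by
    ext e
    simp only [mem_inter, mem_filter, mem_sym2_iff, compl_insert, mem_erase]
    grind
  rw [mbPotential, mbPotential, mbDanger, hlive, eq_sub_iff_add_eq,
    sum_filter_not_add_sum_filter]

theorem mbDanger_insert_right_le (VL VR : Finset V) (v u : V) :
    G.mbDanger VL (insert v VR) u ≤ G.mbDanger VL VR u := by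
  refine sum_le_sum_of_subset_of_nonneg (filter_subset_filter _ ?_)
    fun e _ _ => mbWeight_nonneg VL e
  exact inter_subset_inter_left (sym2_mono (compl_subset_compl.2 (subset_insert v VR)))

theorem mbPotential_of_compl_eq_empty {VL VR : Finset V} (hd : Disjoint VL VR)
    (hfull : (VL ∪ VR)ᶜ = ∅) : G.mbPotential VL VR = 4 * mbScore G VL VR := by
  have hVR : VRᶜ = VL := IsCompl.compl_eq ⟨hd.symm, codisjoint_iff.2 <| by
    rw [sup_eq_union, union_comm]; exact compl_eq_empty_iff _ |>.1 hfull⟩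
  rw [mbPotential, mbScore_eq_card, hVR,
    sum_congr rfl fun e he => mbWeight_of_mem_sym2 (mem_inter.1 he).2, sum_const, nsmul_eq_mul,
    mul_comm]

theorem mbPotential_empty : G.mbPotential ∅ ∅ = #G.edgeFinset := by
  simp [mbPotential, mbWeight_empty]

theorem mbDanger_empty (u : V) : G.mbDanger ∅ ∅ u = G.degree u := by
  simp [mbDanger, mbWeight_empty, ← card_incidenceFinset_eq_degree, incidenceFinset_eq_filter]

theorem four_mul_gameValue_le_mbPotential {VL VR : Finset V} (hd : Disjoint VL VR) :
    4 * gameValue (mbScore G) false VL VR ≤ G.mbPotential VL VR ∧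
    ∀ B, 0 ≤ B → (∀ u ∈ (VL ∪ VR)ᶜ, G.mbDanger VL VR u ≤ B) →
      4 * gameValue (mbScore G) true VL VR ≤ G.mbPotential VL VR + B := by
  induction hn : #(VL ∪ VR)ᶜ using Nat.strong_induction_on generalizing VL VR with
  | _ n ih =>
  subst hn
  rcases (VL ∪ VR)ᶜ.eq_empty_or_nonempty with hfull | hfree
  · simp only [gameValue_of_compl_eq_empty _ hfull, G.mbPotential_of_compl_eq_empty hd hfull]
    exact ⟨le_rfl, fun B hB _ => le_add_of_nonneg_right hB⟩
  constructor
  · -- Breaker claims a vertex of maximal danger.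
    obtain ⟨v, hv, hvmax⟩ := exists_max_image _ (G.mbDanger VL VR) hfree
    have hlt : #(VL ∪ insert v VR)ᶜ < #(VL ∪ VR)ᶜ := by
      rw [union_insert, compl_insert]; exact card_erase_lt_of_mem hv
    have hd' : Disjoint VL (insert v VR) :=
      disjoint_insert_right.2 ⟨(mem_compl.1 hv) ∘ mem_union_left VR, hd⟩
    have hmaker := (ih _ hlt hd' rfl).2 (G.mbDanger VL VR v)
      (sum_nonneg fun e _ => mbWeight_nonneg VL e) fun u hu =>
        (G.mbDanger_insert_right_le VL VR v u).trans (hvmax u (by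
          rw [union_insert, compl_insert] at hu; exact mem_of_mem_erase hu))
    rw [mbPotential_insert_right, sub_add_cancel] at hmaker
    exact (mul_le_mul_of_nonneg_left (gameValue_false_le_true_insert _ hv) (by norm_num)).trans
      hmaker
  · intro B _ hB
    obtain ⟨u, hu, hvalue⟩ := exists_gameValue_true_eq (mbScore G) hfree
    have hlt : #(insert u VL ∪ VR)ᶜ < #(VL ∪ VR)ᶜ := by
      rw [insert_union, compl_insert]; exact card_erase_lt_of_mem hu
    have huL : u ∉ VL := (mem_compl.1 hu) ∘ mem_union_left VR
    have hd' : Disjoint (insert u VL) VR :=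
      disjoint_insert_left.2 ⟨(mem_compl.1 hu) ∘ mem_union_right VL, hd⟩
    have hbreaker := (ih _ hlt hd' rfl).1
    rw [mbPotential_insert_left _ _ huL] at hbreaker
    rw [hvalue]
    linarith [hB u hu]

theorem four_mul_RsMB_le : 4 * RsMB G ≤ #G.edgeFinset := by
  rw [RsMB, ← mbPotential_empty]
  exact (G.four_mul_gameValue_le_mbPotential (disjoint_empty_left ∅)).1

theorem four_mul_LsMB_le : 4 * LsMB G ≤ #G.edgeFinset + G.maxDegree := by
  rw [LsMB, ← mbPotential_empty]
  refine (G.four_mul_gameValue_le_mbPotential (disjoint_empty_left ∅)).2 _ (by positivity)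
    fun u _ => ?_
  rw [mbDanger_empty]
  exact_mod_cast G.degree_le_maxDegree u

end SimpleGraph

namespace binTree

variable {k : ℕ}

instance : NeZero (2 ^ (k + 1) - 1) :=
  ⟨by have := Nat.one_lt_two_pow (Nat.succ_ne_zero k); omega⟩

instance : DecidableRel (binTree k).Adj :=
  fun a b => decidable_of_iff' _ (SimpleGraph.fromRel_adj _ a b)

theorem adj_iff {a b : Fin (2 ^ (k + 1) - 1)} :
    (binTree k).Adj a b ↔
      b.1 = 2 * a.1 + 1 ∨ b.1 = 2 * a.1 + 2 ∨ a.1 = 2 * b.1 + 1 ∨ a.1 = 2 * b.1 + 2 := by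
  rw [binTree, SimpleGraph.fromRel_adj, ne_eq, Fin.ext_iff]
  omega

def parent (c : Fin (2 ^ (k + 1) - 1)) : Fin (2 ^ (k + 1) - 1) :=
  ⟨(c.1 - 1) / 2, by omega⟩

theorem val_parent (c : Fin (2 ^ (k + 1) - 1)) : (parent c).1 = (c.1 - 1) / 2 := rfl

def sibling (c : Fin (2 ^ (k + 1) - 1)) : Fin (2 ^ (k + 1) - 1) :=
  ⟨if c.1 % 2 = 1 then c.1 + 1 else c.1 - 1, by have := pow_succ 2 k; split_ifs <;> omega⟩

theorem sibling_involutive : Function.Involutive (sibling (k := k)) := by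
  intro c
  simp only [sibling, Fin.ext_iff]
  split_ifs <;> omega

theorem sibling_eq_self_iff {c : Fin (2 ^ (k + 1) - 1)} : sibling c = c ↔ c = 0 := by
  simp only [sibling, Fin.ext_iff, Fin.val_zero]
  split_ifs <;> omega

theorem degree_le (u : Fin (2 ^ (k + 1) - 1)) : (binTree k).degree u ≤ 3 := by
  rw [← SimpleGraph.card_neighborFinset_eq_degree, ← card_map Fin.valEmbedding]
  refine (card_le_card (t := {(u.1 - 1) / 2, 2 * u.1 + 1, 2 * u.1 + 2}) fun x hx => ?_).trans
    card_le_three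
  obtain ⟨b, hb, rfl⟩ := mem_map.1 hx
  rw [SimpleGraph.mem_neighborFinset, adj_iff] at hb
  simp only [mem_insert, mem_singleton, Fin.valEmbedding_apply]
  omega

theorem card_edgeFinset : #(binTree k).edgeFinset = 2 ^ (k + 1) - 2 := by
  have hcard : #(univ.erase (0 : Fin (2 ^ (k + 1) - 1))) = 2 ^ (k + 1) - 2 := by
    rw [card_erase_of_mem (mem_univ _), card_univ, Fintype.card_fin]; omega
  rw [← hcard]
  refine card_bij' (fun e _ => e.sup) (fun c _ => s(parent c, c)) ?_ ?_ ?_ ?_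
  · intro e he
    induction e using Sym2.ind with
    | _ a b =>
    rw [SimpleGraph.mem_edgeFinset, SimpleGraph.mem_edgeSet, adj_iff] at he
    rw [mem_erase, Ne, Fin.ext_iff, Sym2.sup_mk, Fin.coe_max, Fin.val_zero]
    exact ⟨by omega, mem_univ _⟩
  · intro c hc
    rw [mem_erase, Ne, Fin.ext_iff, Fin.val_zero] at hc
    rw [SimpleGraph.mem_edgeFinset, SimpleGraph.mem_edgeSet, adj_iff, val_parent]
    omega
  · intro e he
    induction e using Sym2.ind with
    | _ a b =>
    rw [SimpleGraph.mem_edgeFinset, SimpleGraph.mem_edgeSet, adj_iff] at he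
    simp only [Sym2.sup_mk, Sym2.eq_iff, Fin.ext_iff, Fin.coe_max, val_parent]
    omega
  · intro c _
    rw [Sym2.sup_mk, Fin.ext_iff, Fin.coe_max, val_parent]
    omega

/- Vertices are numbered from `0` in heap order, so the internal vertices (depth `< k`) are those
below `2 ^ k - 1`. -/
theorem card_internal_le_card_edgeFinset_inter_sym2 {VL : Finset (Fin (2 ^ (k + 1) - 1))}
    (hcover : MeetsEveryPair sibling VL) :
    #{v ∈ VL | v.1 < 2 ^ k - 1} ≤ #((binTree k).edgeFinset ∩ VL.sym2) := by
  refine card_le_card_of_surjOn Sym2.inf fun v hv => ?_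
  rw [coe_filter, Set.mem_ofPred_eq] at hv
  have hpow := pow_succ 2 k
  let c₁ : Fin (2 ^ (k + 1) - 1) := ⟨2 * v.1 + 1, by omega⟩
  have hc₁ : sibling c₁ ≠ c₁ := by
    rw [Ne, sibling_eq_self_iff, Fin.ext_iff, Fin.val_zero]; exact Nat.succ_ne_zero _
  obtain ⟨c, hcL, hc⟩ : ∃ c ∈ VL, c.1 = 2 * v.1 + 1 ∨ c.1 = 2 * v.1 + 2 := by
    rcases hcover c₁ hc₁ with h | h
    · exact ⟨c₁, h, Or.inl rfl⟩
    · exact ⟨_, h, Or.inr (by simp [sibling, c₁])⟩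
  refine ⟨s(v, c), mem_inter.2 ⟨?_, mk_mem_sym2_iff.2 ⟨hv.1, hcL⟩⟩, ?_⟩
  · rw [SimpleGraph.mem_edgeFinset, SimpleGraph.mem_edgeSet, adj_iff]; omega
  · rw [Sym2.inf_mk, Fin.ext_iff, Fin.coe_min]; omega

theorem two_pow_le_card_internal (hk : 1 ≤ k) {VL : Finset (Fin (2 ^ (k + 1) - 1))}
    (hcover : MeetsEveryPair sibling VL) :
    2 ^ (k - 1) ≤ #{v ∈ VL | v.1 < 2 ^ k - 1} + if 0 ∈ VL then 0 else 1 := by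
  have hpow : 2 ^ k = 2 * 2 ^ (k - 1) := by rw [← pow_succ']; congr 1; omega
  have hpow' := pow_succ 2 k
  have hpos := Nat.one_le_two_pow (n := k - 1)
  set S := (univ.filter fun v : Fin (2 ^ (k + 1) - 1) => v.1 < 2 ^ k - 1).erase 0
  have hS : #S = 2 ^ k - 2 := by
    rw [card_erase_of_mem (by simp; omega), Fin.card_filter_val_lt]; omega
  have hmem : ∀ x, x ∈ S ↔ x.1 ≠ 0 ∧ x.1 < 2 ^ k - 1 := by
    intro x; simp only [S, mem_erase, mem_filter, mem_univ, true_and, Ne, Fin.ext_iff, Fin.val_zero]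
  have hSVL : S ∩ VL = {v ∈ VL | v.1 < 2 ^ k - 1}.erase 0 := by
    ext x; simp [S]; tauto
  have hhalf := card_le_two_mul_card_inter_of_involutive sibling_involutive (S := S) (T := VL)
    (fun x hx => by rw [hmem] at hx ⊢; simp only [sibling]; split_ifs <;> omega)
    (fun x hx => hcover x (by
      rw [Ne, sibling_eq_self_iff, Fin.ext_iff, Fin.val_zero]; exact ((hmem x).1 hx).1))
  rw [hSVL, hS] at hhalf
  split_ifs with h0
  · rw [← card_erase_add_one (mem_filter.2 ⟨h0, by simp; omega⟩)]; omega
  · have := card_erase_le (s := {v ∈ VL | v.1 < 2 ^ k - 1}) (a := 0); omega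

theorem two_pow_le_mbScore (hk : 1 ≤ k) {VL : Finset (Fin (2 ^ (k + 1) - 1))}
    (hcover : MeetsEveryPair sibling VL) (VR : Finset (Fin (2 ^ (k + 1) - 1))) :
    (2 : ℤ) ^ (k - 1) ≤ mbScore (binTree k) VL VR + if 0 ∈ VL then 0 else 1 := by
  have h₁ := two_pow_le_card_internal hk hcover
  have h₂ := card_internal_le_card_edgeFinset_inter_sym2 hcover
  rw [SimpleGraph.mbScore_eq_card]
  split_ifs at h₁ ⊢ <;> exact_mod_cast h₁.trans (by omega)

theorem two_pow_le_LsMB (hk : 1 ≤ k) : (2 : ℤ) ^ (k - 1) ≤ LsMB (binTree k) := by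
  -- Maker opens with the root and then follows the sibling pairing.
  refine (le_gameValue_of_pairing _ sibling_involutive (VL₀ := {0}) (fun VL VR h0 _ hcover => ?_)
    false subset_rfl (fun _ h => absurd h (notMem_empty _))).trans
    (gameValue_false_insert_le _ (by simp))
  simpa [h0 (mem_singleton_self 0)] using two_pow_le_mbScore hk hcover VR

theorem two_pow_sub_one_le_RsMB (hk : 1 ≤ k) :
    (2 : ℤ) ^ (k - 1) - 1 ≤ RsMB (binTree k) := by
  refine le_gameValue_of_pairing _ sibling_involutive (VL₀ := ∅) (fun VL VR _ _ hcover => ?_)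
    false subset_rfl (fun _ h => absurd h (notMem_empty _))
  have := two_pow_le_mbScore hk hcover VR
  split_ifs at this <;> linarith

end binTree

/-- On the complete binary tree of depth `k ≥ 1`, the Maker-Breaker
Incidence values are `Ls(T_k) = 2^{k-1}` and `Rs(T_k) = 2^{k-1} - 1`. -/
theorem makerBreaker_incidence_complete_binary_tree (k : ℕ) (hk : 1 ≤ k) :
    LsMB (binTree k) = (2 : ℤ) ^ (k - 1) ∧
    RsMB (binTree k) = (2 : ℤ) ^ (k - 1) - 1 := by
  have hpow : (2 : ℤ) ^ (k + 1) = 4 * 2 ^ (k - 1) := by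
    rw [show k + 1 = (k - 1) + 2 by omega, pow_add]; ring
  have hedges : (#(binTree k).edgeFinset : ℤ) = 2 ^ (k + 1) - 2 := by
    have := Nat.one_lt_two_pow (Nat.succ_ne_zero k)
    rw [binTree.card_edgeFinset, Nat.cast_sub (by omega)]
    push_cast; ring
  have hdeg : ((binTree k).maxDegree : ℤ) ≤ 3 := by
    exact_mod_cast (binTree k).maxDegree_le_of_forall_degree_le 3 binTree.degree_le
  have hLs := (binTree k).four_mul_LsMB_le
  have hRs := (binTree k).four_mul_RsMB_le
  have hLs' := binTree.two_pow_le_LsMB hk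
  have hRs' := binTree.two_pow_sub_one_le_RsMB hk
  constructor <;> omega
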